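/- arXiv:gr-qc/0509086 — 2 statements merged into one kernel-verified Lean document; each statement's English description precedes it below -/
import Mathlib

section
/- Let X(τ, ζ, ζ̃) and T(u, ζ, ζ̃) be holomorphic functions on open subsets of ℂ³ (with P := 1 + ζζ̃ nonvanishing) that are inverse to each other in their first arguments, i.e. X(T(u,ζ,ζ̃), ζ, ζ̃) = u and T(X(τ,ζ,ζ̃), ζ, ζ̃) = τ, with ∂T/∂u nonvanishing. Define L(u, ζ, ζ̃) := P·(∂X/∂ζ)(T(u,ζ,ζ̃), ζ, ζ̃). Then the identity ðL + L·∂L/∂u = (ð²₍τ₎X)(T(u,ζ,ζ̃), ζ, ζ̃) holds, where ðL := ∂(P·L)/∂ζ (L has spin weight 1) and ð²₍τ₎X := ∂(P²·∂X/∂ζ)/∂ζ taken at fixed τ. Consequently, for any function σ(u, ζ, ζ̃), the function L satisfies the asymptotic shear-free condition ðL + L·∂L/∂u = σ(u, ζ, ζ̃) identically if and only if X satisfies the good cut equation ð²₍τ₎X(τ, ζ, ζ̃) = σ(X(τ,ζ,ζ̃), ζ, ζ̃) identically. -/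
/-!
Put `τ = T(u, ζ, ζ̃)` and `G = P·∂X/∂ζ`. Since `P` does not involve the first coordinate,
`L = G(τ, ζ, ζ̃)` and `P·L = (P·G)(τ, ζ, ζ̃)`, so the chain rule gives
`∂(P L)/∂ζ = (ð²₍τ₎X)(τ, ζ, ζ̃) + P²·X_ζτ·T_ζ` and `L·L_u = P²·X_ζ·X_ζτ·T_u`.
Differentiating `X(T, ζ, ζ̃) = u` gives `X_τ T_u = 1` and `X_τ T_ζ + X_ζ = 0`, hence
`T_ζ + X_ζ T_u = 0` and the two extra terms cancel.

Mathlib does not know that a holomorphic function of several variables is smooth, so `∂X/∂ζ`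
might fail to be differentiable; then all three derivatives in the identity take the junk value
`0`, because multiplying by the nonvanishing `P` and changing the first coordinate invertibly
preserve non-differentiability. The equivalence is the identity transported along the bijection
`(u, ζ, ζ̃) ↦ (τ, ζ, ζ̃)` from `U` onto `V`.
-/

/-- `P = 1 + ζζ̃` for a point `(u, ζ, ζ̃)` (or `(τ, ζ, ζ̃)`) of `ℂ³`. -/
noncomputable def Pfun (p : ℂ × ℂ × ℂ) : ℂ := 1 + p.2.1 * p.2.2

/-- Partial derivative with respect to the first coordinate (`u` resp. `τ`). -/
noncomputable def D1 (f : ℂ × ℂ × ℂ → ℂ) (p : ℂ × ℂ × ℂ) : ℂ :=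
  fderiv ℂ f p ((1 : ℂ), (0 : ℂ), (0 : ℂ))

/-- Partial derivative with respect to the second coordinate `ζ` (the other two held fixed). -/
noncomputable def D2 (f : ℂ × ℂ × ℂ → ℂ) (p : ℂ × ℂ × ℂ) : ℂ :=
  fderiv ℂ f p ((0 : ℂ), (1 : ℂ), (0 : ℂ))

open Filter Topology Set

theorem differentiableAt_mul_iff_of_ne_zero {𝕜 E : Type*} [NontriviallyNormedField 𝕜]
    [NormedAddCommGroup E] [NormedSpace 𝕜 E] {c f : E → 𝕜} {x : E}
    (hc : DifferentiableAt 𝕜 c x) (hcx : c x ≠ 0) :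
    DifferentiableAt 𝕜 (fun y => c y * f y) x ↔ DifferentiableAt 𝕜 f x := by
  refine ⟨fun hcf => ?_, hc.mul⟩
  refine ((hc.inv hcx).mul hcf).congr_of_eventuallyEq ?_
  filter_upwards [hc.continuousAt.eventually_ne hcx] with y hy
  simp [hy]

def reparamFst (t : ℂ × ℂ × ℂ → ℂ) (r : ℂ × ℂ × ℂ) : ℂ × ℂ × ℂ := (t r, r.2.1, r.2.2)

theorem Pfun_reparamFst (t : ℂ × ℂ × ℂ → ℂ) (r : ℂ × ℂ × ℂ) :
    Pfun (reparamFst t r) = Pfun r := rfl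

theorem DifferentiableAt.reparamFst {t : ℂ × ℂ × ℂ → ℂ} {p : ℂ × ℂ × ℂ}
    (ht : DifferentiableAt ℂ t p) : DifferentiableAt ℂ (reparamFst t) p :=
  ht.prodMk differentiableAt_snd

theorem fderiv_reparamFst {t : ℂ × ℂ × ℂ → ℂ} {p : ℂ × ℂ × ℂ} (ht : DifferentiableAt ℂ t p)
    (v : ℂ × ℂ × ℂ) : fderiv ℂ (reparamFst t) p v = (fderiv ℂ t p v, v.2.1, v.2.2) := by
  have h : HasFDerivAt (reparamFst t)
      ((fderiv ℂ t p).prod (ContinuousLinearMap.snd ℂ ℂ (ℂ × ℂ))) p :=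
    ht.hasFDerivAt.prodMk hasFDerivAt_snd
  rw [h.fderiv]
  rfl

theorem D1_comp_reparamFst {F t : ℂ × ℂ × ℂ → ℂ} {p : ℂ × ℂ × ℂ}
    (hF : DifferentiableAt ℂ F (reparamFst t p)) (ht : DifferentiableAt ℂ t p) :
    D1 (F ∘ reparamFst t) p = D1 F (reparamFst t p) * D1 t p := by
  have hv : ((D1 t p, 0, 0) : ℂ × ℂ × ℂ) = D1 t p • ((1 : ℂ), (0 : ℂ), (0 : ℂ)) := by
    simp
  rw [D1, fderiv_comp p hF ht.reparamFst, ContinuousLinearMap.comp_apply,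
    fderiv_reparamFst ht, ← D1, hv, map_smul, smul_eq_mul, ← D1, mul_comm]

theorem D2_comp_reparamFst {F t : ℂ × ℂ × ℂ → ℂ} {p : ℂ × ℂ × ℂ}
    (hF : DifferentiableAt ℂ F (reparamFst t p)) (ht : DifferentiableAt ℂ t p) :
    D2 (F ∘ reparamFst t) p = D1 F (reparamFst t p) * D2 t p + D2 F (reparamFst t p) := by
  have hv : ((D2 t p, 1, 0) : ℂ × ℂ × ℂ)
      = D2 t p • ((1 : ℂ), (0 : ℂ), (0 : ℂ)) + ((0 : ℂ), (1 : ℂ), (0 : ℂ)) := by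
    simp
  rw [D2, fderiv_comp p hF ht.reparamFst, ContinuousLinearMap.comp_apply,
    fderiv_reparamFst ht, ← D2, hv, map_add, map_smul, smul_eq_mul, ← D1, ← D2, mul_comm]

theorem D1_mul {f g : ℂ × ℂ × ℂ → ℂ} {p : ℂ × ℂ × ℂ}
    (hf : DifferentiableAt ℂ f p) (hg : DifferentiableAt ℂ g p) :
    D1 (fun r => f r * g r) p = D1 f p * g p + f p * D1 g p := by
  simp only [D1, fderiv_fun_mul hf hg]
  simp only [add_apply, smul_apply, smul_eq_mul]
  ring

theorem D1_eq_zero_of_not_differentiableAt {f : ℂ × ℂ × ℂ → ℂ} {p : ℂ × ℂ × ℂ}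
    (hf : ¬ DifferentiableAt ℂ f p) : D1 f p = 0 := by
  rw [D1, fderiv_zero_of_not_differentiableAt hf, zero_apply]

theorem D2_eq_zero_of_not_differentiableAt {f : ℂ × ℂ × ℂ → ℂ} {p : ℂ × ℂ × ℂ}
    (hf : ¬ DifferentiableAt ℂ f p) : D2 f p = 0 := by
  rw [D2, fderiv_zero_of_not_differentiableAt hf, zero_apply]

theorem hasFDerivAt_Pfun (p : ℂ × ℂ × ℂ) :
    HasFDerivAt Pfun
      (p.2.1 • (ContinuousLinearMap.snd ℂ ℂ ℂ).comp (ContinuousLinearMap.snd ℂ ℂ (ℂ × ℂ))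
        + p.2.2 • (ContinuousLinearMap.fst ℂ ℂ ℂ).comp (ContinuousLinearMap.snd ℂ ℂ (ℂ × ℂ))) p :=
  ((hasFDerivAt_fst.comp p hasFDerivAt_snd).mul
    (hasFDerivAt_snd.comp p hasFDerivAt_snd)).const_add 1

theorem differentiableAt_Pfun (p : ℂ × ℂ × ℂ) : DifferentiableAt ℂ Pfun p :=
  (hasFDerivAt_Pfun p).differentiableAt

theorem D1_Pfun (p : ℂ × ℂ × ℂ) : D1 Pfun p = 0 := by
  simp [D1, (hasFDerivAt_Pfun p).fderiv]

theorem D1_mul_D1_eq_one_of_comp_reparamFst_eq_fst {X T : ℂ × ℂ × ℂ → ℂ} {p : ℂ × ℂ × ℂ}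
    (hX : DifferentiableAt ℂ X (reparamFst T p)) (hT : DifferentiableAt ℂ T p)
    (hXT : X ∘ reparamFst T =ᶠ[𝓝 p] Prod.fst) :
    D1 X (reparamFst T p) * D1 T p = 1 := by
  rw [← D1_comp_reparamFst hX hT]
  simp [D1, hXT.fderiv_eq, fderiv_fst]

theorem D1_mul_D2_add_D2_eq_zero_of_comp_reparamFst_eq_fst {X T : ℂ × ℂ × ℂ → ℂ}
    {p : ℂ × ℂ × ℂ} (hX : DifferentiableAt ℂ X (reparamFst T p)) (hT : DifferentiableAt ℂ T p)
    (hXT : X ∘ reparamFst T =ᶠ[𝓝 p] Prod.fst) :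
    D1 X (reparamFst T p) * D2 T p + D2 X (reparamFst T p) = 0 := by
  rw [← D2_comp_reparamFst hX hT]
  simp [D2, hXT.fderiv_eq, fderiv_fst]

theorem shear_free_operator_eq_of_differentiableAt {X T L : ℂ × ℂ × ℂ → ℂ} {p : ℂ × ℂ × ℂ}
    (hT : DifferentiableAt ℂ T p) (hX : DifferentiableAt ℂ X (reparamFst T p))
    (hX₂ : DifferentiableAt ℂ (D2 X) (reparamFst T p))
    (hXT : X ∘ reparamFst T =ᶠ[𝓝 p] Prod.fst)
    (hL : L = (fun r => Pfun r * D2 X r) ∘ reparamFst T) :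
    D2 (fun r => Pfun r * L r) p + L p * D1 L p
      = D2 (fun r => Pfun r ^ 2 * D2 X r) (reparamFst T p) := by
  set q := reparamFst T p
  set G : ℂ × ℂ × ℂ → ℂ := fun r => Pfun r * D2 X r
  have hG : DifferentiableAt ℂ G q := (differentiableAt_Pfun q).mul hX₂
  have hPG : DifferentiableAt ℂ (fun r => Pfun r * G r) q := (differentiableAt_Pfun q).mul hG
  have hPsq : (fun r => Pfun r ^ 2 * D2 X r) = fun r => Pfun r * G r := by
    funext r; ring
  have hPL : (fun r => Pfun r * L r) = (fun r => Pfun r * G r) ∘ reparamFst T := by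
    rw [hL]; rfl
  have hD1G : D1 G q = Pfun q * D1 (D2 X) q := by
    rw [D1_mul (differentiableAt_Pfun q) hX₂, D1_Pfun]; ring
  have hD1F : D1 (fun r => Pfun r * G r) q = Pfun q * D1 G q := by
    rw [D1_mul (differentiableAt_Pfun q) hG, D1_Pfun]; ring
  have hτu := D1_mul_D1_eq_one_of_comp_reparamFst_eq_fst hX hT hXT
  have hτζ := D1_mul_D2_add_D2_eq_zero_of_comp_reparamFst_eq_fst hX hT hXT
  rw [hPsq, hPL, D2_comp_reparamFst hPG hT, hL, D1_comp_reparamFst hG hT, hD1F, hD1G]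
  simp only [Function.comp_apply, G, q, Pfun_reparamFst]
  linear_combination (Pfun p ^ 2 * D1 (D2 X) q) * (D1 T p * hτζ - D2 T p * hτu)

theorem shear_free_operator_eq_of_not_differentiableAt {X T L : ℂ × ℂ × ℂ → ℂ}
    {p : ℂ × ℂ × ℂ} (hX : DifferentiableAt ℂ X (reparamFst T p)) (hP : Pfun p ≠ 0)
    (hX₂ : ¬ DifferentiableAt ℂ (D2 X) (reparamFst T p))
    (hXT : X ∘ reparamFst T =ᶠ[𝓝 p] Prod.fst)
    (hTX : T ∘ reparamFst X =ᶠ[𝓝 (reparamFst T p)] Prod.fst)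
    (hL : L = (fun r => Pfun r * D2 X r) ∘ reparamFst T) :
    D2 (fun r => Pfun r * L r) p + L p * D1 L p
      = D2 (fun r => Pfun r ^ 2 * D2 X r) (reparamFst T p) := by
  set q := reparamFst T p
  have hG : ¬ DifferentiableAt ℂ (fun r => Pfun r * D2 X r) q := by
    rwa [differentiableAt_mul_iff_of_ne_zero (differentiableAt_Pfun q) hP]
  have hF : ¬ DifferentiableAt ℂ (fun r => Pfun r ^ 2 * D2 X r) q := by
    simp_rw [pow_two, mul_assoc]
    rwa [differentiableAt_mul_iff_of_ne_zero (differentiableAt_Pfun q) hP]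
  have hL' : ¬ DifferentiableAt ℂ L p := by
    refine fun hLp => hG ((?_ : DifferentiableAt ℂ (L ∘ reparamFst X) q).congr_of_eventuallyEq ?_)
    · have hXq : reparamFst X q = p := congrArg (·, p.2.1, p.2.2) hXT.eq_of_nhds
      rw [← hXq] at hLp
      exact hLp.comp q hX.reparamFst
    · filter_upwards [hTX] with r hr
      rw [hL]
      exact congrArg (fun τ => Pfun r * D2 X (τ, r.2.1, r.2.2)) hr.symm
  have hPL : ¬ DifferentiableAt ℂ (fun r => Pfun r * L r) p := by
    rwa [differentiableAt_mul_iff_of_ne_zero (differentiableAt_Pfun p) hP]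
  rw [D2_eq_zero_of_not_differentiableAt hPL, D1_eq_zero_of_not_differentiableAt hL',
    D2_eq_zero_of_not_differentiableAt hF, mul_zero, add_zero]

theorem shear_free_operator_eq {X T L : ℂ × ℂ × ℂ → ℂ} {p : ℂ × ℂ × ℂ}
    (hT : DifferentiableAt ℂ T p) (hX : DifferentiableAt ℂ X (reparamFst T p))
    (hP : Pfun p ≠ 0) (hXT : X ∘ reparamFst T =ᶠ[𝓝 p] Prod.fst)
    (hTX : T ∘ reparamFst X =ᶠ[𝓝 (reparamFst T p)] Prod.fst)
    (hL : L = (fun r => Pfun r * D2 X r) ∘ reparamFst T) :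
    D2 (fun r => Pfun r * L r) p + L p * D1 L p
      = D2 (fun r => Pfun r ^ 2 * D2 X r) (reparamFst T p) := by
  by_cases hX₂ : DifferentiableAt ℂ (D2 X) (reparamFst T p)
  · exact shear_free_operator_eq_of_differentiableAt hT hX hX₂ hXT hL
  · exact shear_free_operator_eq_of_not_differentiableAt hX hP hX₂ hXT hTX hL

theorem shear_free_condition_iff_good_cut_equation_general
    (U V : Set (ℂ × ℂ × ℂ)) (hU : IsOpen U) (hV : IsOpen V)
    (hPU : ∀ p ∈ U, Pfun p ≠ 0)
    (X T : ℂ × ℂ × ℂ → ℂ)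
    (hX : DifferentiableOn ℂ X V) (hT : DifferentiableOn ℂ T U)
    (hmemV : ∀ p ∈ U, (T p, p.2.1, p.2.2) ∈ V)
    (hmemU : ∀ q ∈ V, (X q, q.2.1, q.2.2) ∈ U)
    (hXT : ∀ p ∈ U, X (T p, p.2.1, p.2.2) = p.1)
    (hTX : ∀ q ∈ V, T (X q, q.2.1, q.2.2) = q.1)
    (L : ℂ × ℂ × ℂ → ℂ)
    (hL : ∀ p, L p = Pfun p * D2 X (T p, p.2.1, p.2.2)) :
    (∀ p ∈ U,
        D2 (fun r => Pfun r * L r) p + L p * D1 L p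
          = D2 (fun r => Pfun r ^ 2 * D2 X r) (T p, p.2.1, p.2.2)) ∧
    (∀ σ : ℂ × ℂ × ℂ → ℂ,
        (∀ p ∈ U, D2 (fun r => Pfun r * L r) p + L p * D1 L p = σ p) ↔
        (∀ q ∈ V, D2 (fun r => Pfun r ^ 2 * D2 X r) q = σ (X q, q.2.1, q.2.2))) := by
  have key : ∀ p ∈ U, D2 (fun r => Pfun r * L r) p + L p * D1 L p
      = D2 (fun r => Pfun r ^ 2 * D2 X r) (reparamFst T p) := fun p hp =>
    shear_free_operator_eq (hT.differentiableAt (hU.mem_nhds hp))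
      (hX.differentiableAt (hV.mem_nhds (hmemV p hp))) (hPU p hp)
      (eventuallyEq_of_mem (hU.mem_nhds hp) hXT)
      (eventuallyEq_of_mem (hV.mem_nhds (hmemV p hp)) hTX) (funext hL)
  have hinv : InvOn (reparamFst X) (reparamFst T) U V :=
    ⟨fun p hp => congrArg (·, p.2.1, p.2.2) (hXT p hp),
      fun q hq => congrArg (·, q.2.1, q.2.2) (hTX q hq)⟩
  refine ⟨key, fun σ => Iff.symm ((hinv.bijOn hmemV hmemU).forall.trans ?_)⟩
  refine forall₂_congr fun p hp => ?_
  rw [key p hp]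
  exact Eq.congr_right (congrArg σ (hinv.1.eq hp))

/-- If `X(τ, ζ, ζ̃)` and `T(u, ζ, ζ̃)` are holomorphic and mutually inverse in
their first arguments, `∂T/∂u ≠ 0`, `P = 1 + ζζ̃ ≠ 0`, and
`L(u, ζ, ζ̃) = P·(∂X/∂ζ)(T(u,ζ,ζ̃), ζ, ζ̃)`, then
`ðL + L·∂L/∂u = (ð²₍τ₎X)(T(u,ζ,ζ̃), ζ, ζ̃)` (where `ðL = ∂(P·L)/∂ζ` since `L` has spin
weight 1, and `ð²₍τ₎X = ∂(P²·∂X/∂ζ)/∂ζ` at fixed `τ`); consequently, for any `σ(u, ζ, ζ̃)`,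
`L` satisfies the shear-free condition `ðL + L·∂L/∂u = σ(u, ζ, ζ̃)` identically if and only if
`X` satisfies the good cut equation `ð²₍τ₎X(τ, ζ, ζ̃) = σ(X(τ,ζ,ζ̃), ζ, ζ̃)` identically. -/
theorem shear_free_condition_iff_good_cut_equation
    (U V : Set (ℂ × ℂ × ℂ)) (hU : IsOpen U) (hV : IsOpen V)
    (hPU : ∀ p ∈ U, Pfun p ≠ 0) (hPV : ∀ q ∈ V, Pfun q ≠ 0)
    (X T : ℂ × ℂ × ℂ → ℂ)
    (hX : DifferentiableOn ℂ X V) (hT : DifferentiableOn ℂ T U)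
    (hmemV : ∀ p ∈ U, (T p, p.2.1, p.2.2) ∈ V)
    (hmemU : ∀ q ∈ V, (X q, q.2.1, q.2.2) ∈ U)
    (hXT : ∀ p ∈ U, X (T p, p.2.1, p.2.2) = p.1)
    (hTX : ∀ q ∈ V, T (X q, q.2.1, q.2.2) = q.1)
    (hTu : ∀ p ∈ U, D1 T p ≠ 0)
    (L : ℂ × ℂ × ℂ → ℂ)
    (hL : ∀ p, L p = Pfun p * D2 X (T p, p.2.1, p.2.2)) :
    (∀ p ∈ U,
        D2 (fun r => Pfun r * L r) p + L p * D1 L p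
          = D2 (fun r => Pfun r ^ 2 * D2 X r) (T p, p.2.1, p.2.2)) ∧
    (∀ σ : ℂ × ℂ × ℂ → ℂ,
        (∀ p ∈ U, D2 (fun r => Pfun r * L r) p + L p * D1 L p = σ p) ↔
        (∀ q ∈ V, D2 (fun r => Pfun r ^ 2 * D2 X r) q = σ (X q, q.2.1, q.2.2))) :=
  shear_free_condition_iff_good_cut_equation_general U V hU hV hPU X T hX hT hmemV hmemU hXT hTX L
    hL
end

section
/- For ζ ∈ ℂ with complex conjugate ζ̄ and P = 1 + ζζ̄, define c_i = −√2((ζ+ζ̄)/P, −i(ζ−ζ̄)/P, (−1+ζζ̄)/P) and m_i = −(√2/2)((1−ζ̄²)/P, −i(1+ζ̄²)/P, 2ζ̄/P). Then for all i, j ∈ {1,2,3} and all ζ: m_i c_j − m_j c_i = −i√2 ε_{ijk} m_k (sum over k). Equivalently, writing Y¹₁ᵢ = m_i, Y⁰₁ᵢ = −c_i and Y¹₂ᵢⱼ = −(c_i m_j + m_i c_j), the Clebsch–Gordan decomposition Y¹₁ᵢ Y⁰₁ⱼ = (i/√2) ε_{ijk} Y¹₁ₖ + (1/2) Y¹₂ᵢⱼ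 holds. -/
/-- `P = 1 + ζζ̄`. -/
noncomputable def Pz (ζ : ℂ) : ℂ := 1 + ζ * (starRingEnd ℂ) ζ

/-- `c_i = −√2((ζ+ζ̄)/P, −i(ζ−ζ̄)/P, (−1+ζζ̄)/P)`. -/
noncomputable def cvec (ζ : ℂ) : Fin 3 → ℂ :=
  ![-(Real.sqrt 2 : ℂ) * ((ζ + (starRingEnd ℂ) ζ) / Pz ζ),
    -(Real.sqrt 2 : ℂ) * (-Complex.I * (ζ - (starRingEnd ℂ) ζ) / Pz ζ),
    -(Real.sqrt 2 : ℂ) * ((-1 + ζ * (starRingEnd ℂ) ζ) / Pz ζ)]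

/-- `m_i = −(√2/2)((1−ζ̄²)/P, −i(1+ζ̄²)/P, 2ζ̄/P)`. -/
noncomputable def mvec3 (ζ : ℂ) : Fin 3 → ℂ :=
  ![-(Real.sqrt 2 / 2 : ℂ) * ((1 - ((starRingEnd ℂ) ζ) ^ 2) / Pz ζ),
    -(Real.sqrt 2 / 2 : ℂ) * (-Complex.I * (1 + ((starRingEnd ℂ) ζ) ^ 2) / Pz ζ),
    -(Real.sqrt 2 / 2 : ℂ) * (2 * (starRingEnd ℂ) ζ / Pz ζ)]

/-- `m̄_i`: componentwise complex conjugate of `m_i`. -/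
noncomputable def mbar3 (ζ : ℂ) : Fin 3 → ℂ := fun i => (starRingEnd ℂ) (mvec3 ζ i)

/-- The Levi-Civita symbol `ε_{ijk}` on `{1,2,3}` (here indexed by `Fin 3`). -/
def eps : Fin 3 → Fin 3 → Fin 3 → ℤ := fun i j k =>
  if (i, j, k) = (0, 1, 2) ∨ (i, j, k) = (1, 2, 0) ∨ (i, j, k) = (2, 0, 1) then 1
  else if (i, j, k) = (2, 1, 0) ∨ (i, j, k) = (1, 0, 2) ∨ (i, j, k) = (0, 2, 1) then -1
  else 0

set_option maxHeartbeats 2000000 in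
/-- `m_i c_j − m_j c_i = −i√2 ε_{ijk} m_k` (sum over `k`); equivalently, with
`Y¹₁ᵢ = m_i`, `Y⁰₁ᵢ = −c_i`, `Y¹₂ᵢⱼ = −(c_i m_j + m_i c_j)`, the Clebsch–Gordan
decomposition `Y¹₁ᵢ Y⁰₁ⱼ = (i/√2) ε_{ijk} Y¹₁ₖ + (1/2) Y¹₂ᵢⱼ` holds. -/
theorem commutator_m_c (ζ : ℂ) (i j : Fin 3) :
    (mvec3 ζ i * cvec ζ j - mvec3 ζ j * cvec ζ i =
        -Complex.I * (Real.sqrt 2 : ℂ) * ∑ k : Fin 3, (eps i j k : ℂ) * mvec3 ζ k) ∧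
    (mvec3 ζ i * (-cvec ζ j) =
        Complex.I / (Real.sqrt 2 : ℂ) * ∑ k : Fin 3, (eps i j k : ℂ) * mvec3 ζ k
          + (1 / 2 : ℂ) * (-(cvec ζ i * mvec3 ζ j + mvec3 ζ i * cvec ζ j))) := by
  have hP : Pz ζ ≠ 0 := by
    intro h
    have := congrArg Complex.re h
    simp [Pz, Complex.mul_conj] at this
    nlinarith [Complex.normSq_nonneg ζ]
  have h2 : (Real.sqrt 2 : ℂ) ^ 2 = 2 := by
    norm_cast
    rw [Real.sq_sqrt] <;> norm_num
  have hs : (Real.sqrt 2 : ℂ) ≠ 0 := by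
    simpa using Real.sqrt_ne_zero'.mpr (by norm_num : (0:ℝ) < 2)
  have h1 : mvec3 ζ i * cvec ζ j - mvec3 ζ j * cvec ζ i =
      -Complex.I * (Real.sqrt 2 : ℂ) * ∑ k : Fin 3, (eps i j k : ℂ) * mvec3 ζ k := by
    fin_cases i <;> fin_cases j <;>
      simp [mvec3, cvec, eps, Fin.sum_univ_three] <;>
      field_simp <;>
      ring_nf <;>
      simp only [h2, Pz, Complex.I_sq] <;>
      ring
  refine ⟨h1, ?_⟩
  have h3 : Complex.I / (Real.sqrt 2 : ℂ) = Complex.I * (Real.sqrt 2 : ℂ) / 2 := by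
    rw [div_eq_div_iff hs two_ne_zero]
    linear_combination -Complex.I * h2
  rw [h3]
  linear_combination (-(1:ℂ)/2) * h1
end
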